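/- Let x1, x0 be Bessel sequences in X and u0 a Bessel sequence in U with synthesis operators Ξ1, Ξ0, Υ0, and suppose the data-generation assumption holds. Fix γ ∈ (0,1). Then the following are equivalent. (i) The data (x1,x0,u0) are informative for stabilization with decay rate γ, and there exist a constant c ≥ 0 and a stabilizing gain K ∈ L(X,U) with decay rate γ such that (Ξ0 + K*Υ0)*(Ξ0 + K*Υ0) ≤ c² (Ξ0*Ξ0 + Υ0*Υ0)² as operators on ℓ²(ℕ), where K* ∈ L(U,X) is the Hilbert-space adjoint of K. (ii) The sequence x0 is a frame for X, and there exists a right inverse Ξ0† ∈ L(X, ℓ²(ℕ)) of Ξ0 (Ξ0 Ξ0† = I) such that Ξ1 Ξ0† is power stable with decay rate γ. -/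

import Mathlib

noncomputable section
open ContinuousLinearMap

/-- `ℓ²(ℕ)`: the Hilbert space of square-summable complex sequences. -/
abbrev l2 : Type := lp (fun _ : ℕ => ℂ) 2

/-- `η` is a Bessel sequence in `Y`. -/
def Bessel {Y : Type} [NormedAddCommGroup Y] [InnerProductSpace ℂ Y] (η : ℕ → Y) : Prop :=
  ∃ α : ℝ, 0 < α ∧ ∀ y : Y, ∑' k : ℕ, ‖(inner ℂ y (η k) : ℂ)‖ ^ 2 ≤ α * ‖y‖ ^ 2

/-- `η` is a frame for `Y`. -/
def IsFrame {Y : Type} [NormedAddCommGroup Y] [InnerProductSpace ℂ Y] (η : ℕ → Y) : Prop :=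
  ∃ α β : ℝ, 0 < α ∧ 0 < β ∧ ∀ y : Y,
    β * ‖y‖ ^ 2 ≤ ∑' k : ℕ, ‖(inner ℂ y (η k) : ℂ)‖ ^ 2 ∧
      ∑' k : ℕ, ‖(inner ℂ y (η k) : ℂ)‖ ^ 2 ≤ α * ‖y‖ ^ 2

/-- `T` is the synthesis operator associated with `η`: `T w = ∑ₖ wₖ • ηₖ`. -/
def IsSynthesis {Y : Type} [NormedAddCommGroup Y] [InnerProductSpace ℂ Y] (η : ℕ → Y)
    (T : l2 →L[ℂ] Y) : Prop :=
  ∀ w : l2, HasSum (fun k : ℕ => w k • η k) (T w)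

/-!
Write `G = Ξ0* Ξ0 + Υ0* Υ0` and `L = Ξ0 + K* Υ0`. The operator inequality in (i) says
`‖L w‖ ≤ c ‖G w‖`, so a Douglas-type factorization gives a bounded `Ψ` with `L = Ψ G`.
Because `‖A + B K‖` is bounded on the affine set of pairs `(A, B)` consistent with the data,
`K` annihilates every direction `(ΔA, ΔB)` of that set; testing this on rank-one directions
shows that `Ξ0* a + Υ0* b = 0` forces `a + K* b = 0`. Together with `L = Ψ G` this makes
`Ξd = Ψ*` a right inverse of `Ξ0` with `Υ0 Ξd = K`, so `Ξ1 Ξd = As + Bs K` is power stable, and a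
synthesis operator with a right inverse has a frame lower bound.
Conversely, for a right inverse `Ξd` the gain `K = Υ0 Ξd` satisfies `A + B K = Ξ1 Ξd` for every
consistent pair, and `L = Ξd* G`, so `c = ‖Ξd‖` works.
-/

section Operators

variable {𝕜 : Type*} [RCLike 𝕜]

lemma eq_zero_of_forall_norm_add_natCast_smul_le {V : Type*} [NormedAddCommGroup V]
    [NormedSpace 𝕜 V] (a d : V) (C : ℝ) (h : ∀ n : ℕ, ‖a + (n : 𝕜) • d‖ ≤ C) : d = 0 := by
  have hbound : ∀ n : ℕ, n * ‖d‖ ≤ C + ‖a‖ := fun n => by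
    calc n * ‖d‖ = ‖(a + (n : 𝕜) • d) - a‖ := by
          rw [add_sub_cancel_left, norm_smul, RCLike.norm_natCast]
      _ ≤ ‖a + (n : 𝕜) • d‖ + ‖a‖ := norm_sub_le _ _
      _ ≤ C + ‖a‖ := by linarith [h n]
  by_contra hd
  obtain ⟨n, hn⟩ := exists_nat_gt ((C + ‖a‖) / ‖d‖)
  rw [div_lt_iff₀ (norm_pos_iff.2 hd)] at hn
  linarith [hbound n]

lemma exists_comp_eq_of_norm_le {E F W : Type*}
    [NormedAddCommGroup E] [NormedSpace 𝕜 E]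
    [NormedAddCommGroup F] [InnerProductSpace 𝕜 F] [CompleteSpace F]
    [NormedAddCommGroup W] [NormedSpace 𝕜 W] [CompleteSpace W]
    (G : E →L[𝕜] F) (L : E →L[𝕜] W) (c : ℝ)
    (hLG : ∀ w, ‖L w‖ ≤ c * ‖G w‖) : ∃ Ψ : F →L[𝕜] W, Ψ ∘L G = L := by
  set V : Submodule 𝕜 F := G.range.topologicalClosure
  have : CompleteSpace V := (Submodule.isClosed_topologicalClosure _).completeSpace_coe
  let e : E →ₗ[𝕜] V := (G : E →ₗ[𝕜] F).codRestrict V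
    fun w => Submodule.le_topologicalClosure _ ⟨w, rfl⟩
  have he : DenseRange e := by
    rw [DenseRange, dense_iff_closure_eq, Set.eq_univ_iff_forall,
      Topology.IsInducing.subtypeVal.closure_eq_preimage_closure_image, ← Set.range_comp]
    exact fun v => v.2
  refine ⟨(L : E →ₗ[𝕜] W).extendOfNorm e ∘L V.orthogonalProjectionOnto, ?_⟩
  ext w
  have hproj : V.orthogonalProjectionOnto (G w) = e w :=
    Submodule.orthogonalProjectionOnto_mem_subspace_eq_self (e w)
  rw [comp_apply, comp_apply, hproj]
  exact LinearMap.extendOfNorm_eq he ⟨c, hLG⟩ w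

variable {E X U : Type*}
  [NormedAddCommGroup E] [InnerProductSpace 𝕜 E] [CompleteSpace E]
  [NormedAddCommGroup X] [InnerProductSpace 𝕜 X] [CompleteSpace X]
  [NormedAddCommGroup U] [InnerProductSpace 𝕜 U] [CompleteSpace U]

lemma isPositive_sq_smul_sq_sub_adjoint_comp_self_iff (c : ℝ) {G : E →L[𝕜] E}
    (hG : IsSelfAdjoint G) (L : E →L[𝕜] X) :
    (((c : 𝕜) ^ 2) • G ^ 2 - adjoint L ∘L L).IsPositive ↔ ∀ w, ‖L w‖ ≤ |c| * ‖G w‖ := by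
  have hc : IsSelfAdjoint ((c : 𝕜) ^ 2) := by
    rw [← RCLike.ofReal_pow]; exact RCLike.conj_ofReal _
  have hsa : IsSelfAdjoint (((c : 𝕜) ^ 2) • G ^ 2 - adjoint L ∘L L) :=
    (hc.smul (hG.pow 2)).sub (isPositive_adjoint_comp_self L).isSelfAdjoint
  have hquad : ∀ w, (((c : 𝕜) ^ 2) • G ^ 2 - adjoint L ∘L L).reApplyInnerSelf w
      = (|c| * ‖G w‖) ^ 2 - ‖L w‖ ^ 2 := by
    intro w
    rw [mul_pow, sq_abs, reApplyInnerSelf_apply, apply_norm_sq_eq_inner_adjoint_left L,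
      apply_norm_sq_eq_inner_adjoint_left G, hG.adjoint_eq, sub_apply,
      inner_sub_left, map_sub, smul_apply, inner_smul_left, ← RCLike.ofReal_pow, RCLike.conj_ofReal,
      RCLike.re_ofReal_mul, pow_two G]
    rfl
  rw [isPositive_def', and_iff_right hsa]
  refine forall_congr' fun w => ?_
  rw [hquad, sub_nonneg]
  exact pow_le_pow_iff_left₀ (norm_nonneg _) (by positivity) two_ne_zero

variable {S : E →L[𝕜] X} {T : E →L[𝕜] U} {K : X →L[𝕜] U}

lemma comp_adjoint_eq_id_and_comp_adjoint_eq
    (hker : ∀ a b, adjoint S a + adjoint T b = 0 → a + adjoint K b = 0) {Ψ : E →L[𝕜] X}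
    (hΨ : Ψ ∘L (adjoint S ∘L S + adjoint T ∘L T) = S + adjoint K ∘L T) :
    S ∘L adjoint Ψ = ContinuousLinearMap.id 𝕜 X ∧ T ∘L adjoint Ψ = K := by
  have hR : (adjoint S ∘L S + adjoint T ∘L T) ∘L adjoint Ψ = adjoint S + adjoint T ∘L K := by
    simpa [adjoint_comp] using congrArg adjoint hΨ
  suffices h : ∀ x, S (adjoint Ψ x) - x = 0 ∧ T (adjoint Ψ x) - K x = 0 by
    constructor <;> ext x
    exacts [sub_eq_zero.1 (h x).1, sub_eq_zero.1 (h x).2]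
  intro x
  set p := S (adjoint Ψ x) - x
  set q := T (adjoint Ψ x) - K x
  have hpq : adjoint S p + adjoint T q = 0 := by
    have h := congrArg (· x) hR
    simp only [add_apply, comp_apply] at h
    rw [map_sub, map_sub, sub_add_sub_comm, h, sub_self]
  have hinner : inner 𝕜 p p + inner 𝕜 q q
      = inner 𝕜 (adjoint S p + adjoint T q) (adjoint Ψ x) - inner 𝕜 (p + adjoint K q) x := by
    rw [inner_add_left, inner_add_left, adjoint_inner_left, adjoint_inner_left,
      adjoint_inner_left]
    conv_lhs => rw [inner_sub_right, inner_sub_right]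
    ring
  rw [hpq, hker p q hpq, inner_zero_left, inner_zero_left, sub_zero] at hinner
  have hnorm : ‖p‖ ^ 2 + ‖q‖ ^ 2 = 0 := by
    simpa only [map_add, inner_self_eq_norm_sq, map_zero] using congrArg RCLike.re hinner
  obtain ⟨hp, hq⟩ := (add_eq_zero_iff_of_nonneg (sq_nonneg _) (sq_nonneg _)).1 hnorm
  exact ⟨norm_eq_zero.1 (pow_eq_zero_iff two_ne_zero |>.1 hp),
    norm_eq_zero.1 (pow_eq_zero_iff two_ne_zero |>.1 hq)⟩

lemma add_adjoint_comp_comp_eq_adjoint_comp {R : X →L[𝕜] E}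
    (hR : S ∘L R = ContinuousLinearMap.id 𝕜 X) :
    S + adjoint (T ∘L R) ∘L T = adjoint R ∘L (adjoint S ∘L S + adjoint T ∘L T) := by
  rw [comp_add, ← comp_assoc, ← adjoint_comp, hR, adjoint_id, id_comp, adjoint_comp, comp_assoc]

end Operators

section Synthesis

variable {Y : Type} [NormedAddCommGroup Y] [InnerProductSpace ℂ Y] {η : ℕ → Y} {T : l2 →L[ℂ] Y}

lemma IsSynthesis.apply_single (hT : IsSynthesis η T) (k : ℕ) : T (lp.single 2 k 1) = η k := by
  refine (hT _).unique ?_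
  convert hasSum_ite_eq k (η k) using 2 with j
  split_ifs with h <;> simp [h]

lemma IsSynthesis.eq_comp_add_comp {Z V : Type} [NormedAddCommGroup Z] [InnerProductSpace ℂ Z]
    [NormedAddCommGroup V] [InnerProductSpace ℂ V] {ζ : ℕ → Z} {υ : ℕ → V}
    {S : l2 →L[ℂ] Z} {R : l2 →L[ℂ] V} (hT : IsSynthesis η T) (hS : IsSynthesis ζ S)
    (hR : IsSynthesis υ R) {A : Z →L[ℂ] Y} {B : V →L[ℂ] Y} (h : ∀ k, η k = A (ζ k) + B (υ k)) :
    T = A ∘L S + B ∘L R := by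
  ext w
  refine (hT w).unique ?_
  simp_rw [h, smul_add, ← map_smul]
  exact ((hS w).mapL A).add ((hR w).mapL B)

variable [CompleteSpace Y]

lemma IsSynthesis.adjoint_apply (hT : IsSynthesis η T) (y : Y) (k : ℕ) :
    adjoint T y k = inner ℂ (η k) y := by
  rw [← hT.apply_single, ← adjoint_inner_right, lp.inner_single_left]
  simp

lemma IsSynthesis.norm_adjoint_apply_sq (hT : IsSynthesis η T) (y : Y) :
    ‖adjoint T y‖ ^ 2 = ∑' k, ‖(inner ℂ y (η k) : ℂ)‖ ^ 2 := by
  have h := lp.hasSum_norm (p := 2) (by norm_num) (adjoint T y)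
  simp only [ENNReal.toReal_ofNat, Real.rpow_two, hT.adjoint_apply, norm_inner_symm] at h
  exact h.tsum_eq.symm

lemma IsSynthesis.isFrame_of_comp_eq_id (hT : IsSynthesis η T) {R : Y →L[ℂ] l2}
    (hR : T ∘L R = ContinuousLinearMap.id ℂ Y) : IsFrame η := by
  refine ⟨‖T‖ ^ 2 + 1, (‖R‖ ^ 2 + 1)⁻¹, by positivity, by positivity, fun y => ?_⟩
  rw [← hT.norm_adjoint_apply_sq]
  have hy : adjoint R (adjoint T y) = y := by
    rw [← comp_apply, ← adjoint_comp, hR, adjoint_id, id_apply]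
  have hlower : ‖y‖ ≤ ‖R‖ * ‖adjoint T y‖ := by
    calc ‖y‖ = ‖adjoint R (adjoint T y)‖ := by rw [hy]
      _ ≤ ‖adjoint R‖ * ‖adjoint T y‖ := le_opNorm _ _
      _ = ‖R‖ * ‖adjoint T y‖ := by rw [LinearIsometryEquiv.norm_map]
  have hupper : ‖adjoint T y‖ ≤ ‖T‖ * ‖y‖ := by
    simpa only [LinearIsometryEquiv.norm_map] using (adjoint T).le_opNorm y
  constructor
  · rw [inv_mul_le_iff₀ (by positivity)]
    nlinarith [norm_nonneg y, norm_nonneg R]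
  · nlinarith [norm_nonneg (adjoint T y), norm_nonneg T]

end Synthesis

section Perturbation

variable {𝕜 : Type*} [RCLike 𝕜] {X U : Type*} [NormedAddCommGroup X] [NormedSpace 𝕜 X]
  [NormedAddCommGroup U] [NormedSpace 𝕜 U] {x1 x0 : ℕ → X} {u0 : ℕ → U} {K : X →L[𝕜] U}

lemma add_comp_eq_zero_of_forall_norm_le {As : X →L[𝕜] X} {Bs : U →L[𝕜] X} {C : ℝ}
    (hgen : ∀ k, x1 k = As (x0 k) + Bs (u0 k))
    (hK : ∀ (A : X →L[𝕜] X) (B : U →L[𝕜] X), (∀ k, x1 k = A (x0 k) + B (u0 k)) →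
      ‖A + B ∘L K‖ ≤ C)
    {ΔA : X →L[𝕜] X} {ΔB : U →L[𝕜] X} (hΔ : ∀ k, ΔA (x0 k) + ΔB (u0 k) = 0) :
    ΔA + ΔB ∘L K = 0 := by
  refine eq_zero_of_forall_norm_add_natCast_smul_le (𝕜 := 𝕜) (As + Bs ∘L K) _ C fun n => ?_
  have hcons : ∀ k, x1 k = (As + (n : 𝕜) • ΔA) (x0 k) + (Bs + (n : 𝕜) • ΔB) (u0 k) := fun k => by
    simp only [add_apply, smul_apply, hgen k]
    rw [add_add_add_comm, ← smul_add, hΔ k, smul_zero, add_zero]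
  have hsplit : As + Bs ∘L K + (n : 𝕜) • (ΔA + ΔB ∘L K)
      = (As + (n : 𝕜) • ΔA) + (Bs + (n : 𝕜) • ΔB) ∘L K := by
    rw [add_comp, smul_comp]
    module
  exact hsplit ▸ hK _ _ hcons

end Perturbation

lemma IsSynthesis.add_adjoint_eq_zero_of_adjoint_add_eq_zero {X U : Type}
    [NormedAddCommGroup X] [InnerProductSpace ℂ X] [CompleteSpace X]
    [NormedAddCommGroup U] [InnerProductSpace ℂ U] [CompleteSpace U]
    {x0 : ℕ → X} {u0 : ℕ → U} {Ξ0 : l2 →L[ℂ] X} {Υ0 : l2 →L[ℂ] U} {K : X →L[ℂ] U}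
    (hΞ0 : IsSynthesis x0 Ξ0) (hΥ0 : IsSynthesis u0 Υ0)
    (hK : ∀ (ΔA : X →L[ℂ] X) (ΔB : U →L[ℂ] X), (∀ k, ΔA (x0 k) + ΔB (u0 k) = 0) →
      ΔA + ΔB ∘L K = 0)
    {a : X} {b : U} (hab : adjoint Ξ0 a + adjoint Υ0 b = 0) : a + adjoint K b = 0 := by
  set ξ := a + adjoint K b
  have hΔ : ∀ k, (innerSL ℂ a).smulRight ξ (x0 k) + (innerSL ℂ b).smulRight ξ (u0 k) = 0 := by
    intro k
    have h := congrArg (fun f : l2 => inner ℂ f (lp.single 2 k 1)) hab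
    simp only [inner_add_left, adjoint_inner_left, hΞ0.apply_single, hΥ0.apply_single,
      inner_zero_left] at h
    simp only [smulRight_apply, innerSL_apply_apply, ← add_smul, h, zero_smul]
  have hξ := congrArg (· ξ) (hK _ _ hΔ)
  simp only [add_apply, comp_apply, smulRight_apply, innerSL_apply_apply, ← adjoint_inner_left K,
    ← add_smul, ← inner_add_left, zero_apply, smul_eq_zero] at hξ
  exact hξ.elim inner_self_eq_zero.1 id

theorem stmt_8_general
    {X : Type} [NormedAddCommGroup X] [InnerProductSpace ℂ X] [CompleteSpace X]
    {U : Type} [NormedAddCommGroup U] [InnerProductSpace ℂ U] [CompleteSpace U]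
    (x1 x0 : ℕ → X) (u0 : ℕ → U)
    (Ξ1 Ξ0 : l2 →L[ℂ] X) (Υ0 : l2 →L[ℂ] U)
    (hΞ1 : IsSynthesis x1 Ξ1) (hΞ0 : IsSynthesis x0 Ξ0) (hΥ0 : IsSynthesis u0 Υ0)
    (As : X →L[ℂ] X) (Bs : U →L[ℂ] X)
    (hgen : ∀ k : ℕ, x1 k = As (x0 k) + Bs (u0 k))
    (γ : ℝ) :
    -- (i)
    ((∃ (K : X →L[ℂ] U) (M : ℝ), 1 ≤ M ∧ ∀ (A : X →L[ℂ] X) (B : U →L[ℂ] X),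
          (∀ k : ℕ, x1 k = A (x0 k) + B (u0 k)) →
          ∀ k : ℕ, ‖(A + B.comp K) ^ k‖ ≤ M * γ ^ k) ∧
      (∃ (c : ℝ) (K : X →L[ℂ] U), 0 ≤ c ∧
        (∃ M : ℝ, 1 ≤ M ∧ ∀ (A : X →L[ℂ] X) (B : U →L[ℂ] X),
            (∀ k : ℕ, x1 k = A (x0 k) + B (u0 k)) →
            ∀ k : ℕ, ‖(A + B.comp K) ^ k‖ ≤ M * γ ^ k) ∧
        -- (Ξ0 + K*Υ0)*(Ξ0 + K*Υ0) ≤ c² (Ξ0*Ξ0 + Υ0*Υ0)²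
        ((c ^ 2 : ℂ) • ((adjoint Ξ0 ∘L Ξ0 + adjoint Υ0 ∘L Υ0) ^ 2)
            - adjoint (Ξ0 + (adjoint K) ∘L Υ0) ∘L (Ξ0 + (adjoint K) ∘L Υ0)).IsPositive))
    ↔
    -- (ii)
    (IsFrame x0 ∧
      ∃ Ξd : X →L[ℂ] l2, Ξ0 ∘L Ξd = ContinuousLinearMap.id ℂ X ∧
        ∃ M : ℝ, 1 ≤ M ∧ ∀ k : ℕ, ‖(Ξ1 ∘L Ξd) ^ k‖ ≤ M * γ ^ k) := by
  have hG : IsSelfAdjoint (adjoint Ξ0 ∘L Ξ0 + adjoint Υ0 ∘L Υ0) :=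
    ((isPositive_adjoint_comp_self Ξ0).add (isPositive_adjoint_comp_self Υ0)).isSelfAdjoint
  constructor
  · rintro ⟨-, c, K, -, ⟨M, hM, hK⟩, hpos⟩
    have hker : ∀ a b, adjoint Ξ0 a + adjoint Υ0 b = 0 → a + adjoint K b = 0 := fun _ _ =>
      hΞ0.add_adjoint_eq_zero_of_adjoint_add_eq_zero hΥ0 fun _ _ =>
        add_comp_eq_zero_of_forall_norm_le hgen fun A B hAB => by simpa only [pow_one] using hK A B hAB 1
    obtain ⟨Ψ, hΨ⟩ := exists_comp_eq_of_norm_le _ _ _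
      ((isPositive_sq_smul_sq_sub_adjoint_comp_self_iff c hG _).1 hpos)
    obtain ⟨hΞd, hΥd⟩ := comp_adjoint_eq_id_and_comp_adjoint_eq hker hΨ
    refine ⟨hΞ0.isFrame_of_comp_eq_id hΞd, adjoint Ψ, hΞd, M, hM, fun k => ?_⟩
    rw [hΞ1.eq_comp_add_comp hΞ0 hΥ0 hgen, add_comp, comp_assoc, comp_assoc, hΞd, hΥd, comp_id]
    exact hK As Bs hgen k
  · rintro ⟨-, Ξd, hΞd, M, hM, hMk⟩
    have hstab : ∀ (A : X →L[ℂ] X) (B : U →L[ℂ] X), (∀ k, x1 k = A (x0 k) + B (u0 k)) →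
        ∀ k : ℕ, ‖(A + B ∘L (Υ0 ∘L Ξd)) ^ k‖ ≤ M * γ ^ k := by
      intro A B hAB
      rwa [← comp_assoc, ← comp_id A, ← hΞd, ← comp_assoc, ← add_comp,
        ← hΞ1.eq_comp_add_comp hΞ0 hΥ0 hAB]
    refine ⟨⟨_, M, hM, hstab⟩, ‖Ξd‖, _, norm_nonneg _, ⟨M, hM, hstab⟩,
      (isPositive_sq_smul_sq_sub_adjoint_comp_self_iff ‖Ξd‖ hG _).2 fun w => ?_⟩
    rw [abs_of_nonneg (norm_nonneg Ξd), add_adjoint_comp_comp_eq_adjoint_comp hΞd, comp_apply,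
      ← LinearIsometryEquiv.norm_map adjoint Ξd]
    exact le_opNorm _ _

theorem stmt_8
    {X : Type} [NormedAddCommGroup X] [InnerProductSpace ℂ X] [CompleteSpace X] [Nontrivial X]
    {U : Type} [NormedAddCommGroup U] [InnerProductSpace ℂ U] [CompleteSpace U] [Nontrivial U]
    (x1 x0 : ℕ → X) (u0 : ℕ → U)
    (hx1B : Bessel x1) (hx0B : Bessel x0) (hu0B : Bessel u0)
    (Ξ1 Ξ0 : l2 →L[ℂ] X) (Υ0 : l2 →L[ℂ] U)
    (hΞ1 : IsSynthesis x1 Ξ1) (hΞ0 : IsSynthesis x0 Ξ0) (hΥ0 : IsSynthesis u0 Υ0)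
    (As : X →L[ℂ] X) (Bs : U →L[ℂ] X)
    (hgen : ∀ k : ℕ, x1 k = As (x0 k) + Bs (u0 k))
    (γ : ℝ) (hγ0 : 0 < γ) (hγ1 : γ < 1) :
    -- (i)
    ((∃ (K : X →L[ℂ] U) (M : ℝ), 1 ≤ M ∧ ∀ (A : X →L[ℂ] X) (B : U →L[ℂ] X),
          (∀ k : ℕ, x1 k = A (x0 k) + B (u0 k)) →
          ∀ k : ℕ, ‖(A + B.comp K) ^ k‖ ≤ M * γ ^ k) ∧
      (∃ (c : ℝ) (K : X →L[ℂ] U), 0 ≤ c ∧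
        (∃ M : ℝ, 1 ≤ M ∧ ∀ (A : X →L[ℂ] X) (B : U →L[ℂ] X),
            (∀ k : ℕ, x1 k = A (x0 k) + B (u0 k)) →
            ∀ k : ℕ, ‖(A + B.comp K) ^ k‖ ≤ M * γ ^ k) ∧
        -- (Ξ0 + K*Υ0)*(Ξ0 + K*Υ0) ≤ c² (Ξ0*Ξ0 + Υ0*Υ0)²
        ((c ^ 2 : ℂ) • ((adjoint Ξ0 ∘L Ξ0 + adjoint Υ0 ∘L Υ0) ^ 2)
            - adjoint (Ξ0 + (adjoint K) ∘L Υ0) ∘L (Ξ0 + (adjoint K) ∘L Υ0)).IsPositive))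
    ↔
    -- (ii)
    (IsFrame x0 ∧
      ∃ Ξd : X →L[ℂ] l2, Ξ0 ∘L Ξd = ContinuousLinearMap.id ℂ X ∧
        ∃ M : ℝ, 1 ≤ M ∧ ∀ k : ℕ, ‖(Ξ1 ∘L Ξd) ^ k‖ ≤ M * γ ^ k) :=
  stmt_8_general x1 x0 u0 Ξ1 Ξ0 Υ0 hΞ1 hΞ0 hΥ0 As Bs hgen γ
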